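/- arXiv:1606.01724 — 2 statements merged into one kernel-verified Lean document; each statement's English description precedes it below -/
import Mathlib

section
/- Let a > 0. Then there exists r > 0 with f(r;a) = 0 if and only if there exists r > 0 with g(r;a) = 0, where g(r;a) = -|f'(r;a)|^{p-2} f'(r;a); equivalently, the first zero R(a) of f(·;a) is finite if and only if the first positive zero R_1(a) of g(·;a) is finite. -/
open Real Set Filter MeasureTheory

/-- `f` is a solution of the profile equation with parameter `a`:
`f` is C¹ on `[0,∞)` with derivative `f'`, the map `r ↦ |f'(r)|^{p-2} f'(r)` is C¹ on `[0,∞)`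
with derivative `F'`, the ODE
`(|f'|^{p-2}f')'(r) + ((N-1)/r)(|f'|^{p-2}f')(r) + f(r) - |f'(r)|^{p-1} = 0` holds for `r > 0`,
and `f 0 = a`, `f' 0 = 0`. -/
def IsProfileSol (N : ℕ) (p a : ℝ) (f f' F' : ℝ → ℝ) : Prop :=
  (∀ r ∈ Ici (0:ℝ), HasDerivWithinAt f (f' r) (Ici 0) r) ∧
  ContinuousOn f' (Ici 0) ∧
  (∀ r ∈ Ici (0:ℝ), HasDerivWithinAt (fun s => |f' s| ^ (p - 2) * f' s) (F' r) (Ici 0) r) ∧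
  ContinuousOn F' (Ici 0) ∧
  (∀ r, 0 < r →
    F' r + (((N : ℝ) - 1) / r) * (|f' r| ^ (p - 2) * f' r) + f r - |f' r| ^ (p - 1) = 0) ∧
  f 0 = a ∧ f' 0 = 0

/-- `g(r;a) = -|f'(r;a)|^{p-2} f'(r;a)`. -/
noncomputable def gFun (p : ℝ) (f' : ℝ → ℝ) (r : ℝ) : ℝ := -(|f' r| ^ (p - 2) * f' r)

/-- `ρ(r) = r^{N-1} e^r`. -/
noncomputable def rho (N : ℕ) (r : ℝ) : ℝ := r ^ (N - 1) * Real.exp r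

/-- the derivative of `ρ`. -/
noncomputable def rho' (N : ℕ) (r : ℝ) : ℝ :=
  (((N : ℝ) - 1) * r ^ (N - 2) + r ^ (N - 1)) * Real.exp r

/-- `w(r;a) = ρ(r) g(r;a)`. -/
noncomputable def wFun (N : ℕ) (p : ℝ) (f' : ℝ → ℝ) (r : ℝ) : ℝ := rho N r * gFun p f' r

/-- the derivative `w'(r;a) = ρ'(r) g(r;a) + ρ(r) g'(r;a)`, where `g' = -F'`. -/
noncomputable def wDeriv (N : ℕ) (p : ℝ) (f' F' : ℝ → ℝ) (r : ℝ) : ℝ :=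
  rho' N r * gFun p f' r - rho N r * F' r

/-!
Write `w = ρ g` with `ρ(r) = r^{N-1} e^r`; the profile equation becomes `w' = ρ (g + f - |g|)`,
which is `ρ f` wherever `g ≥ 0`. Near `0`, `f ≈ a` dominates `|g|`, so `w`, and with it `g`, is
positive on some `(0, δ]`.

If `f` has no positive zero it stays positive, so `w` increases as long as `g > 0` and `g` can
never come back down to `0`. If `g` has no positive zero it stays positive, so `f` decreases;
once `f(r₁) < 0`, beyond `r₁` the equation gives `g' = f - |g| - (N-1)/r · g ≤ f < f(r₁)`, and
`g` would become negative. Hence `f` cannot vanish either.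
-/

lemma abs_abs_rpow_sub_two_mul_self {p : ℝ} (hp : 1 < p) (x : ℝ) :
    |(|x| ^ (p - 2) * x)| = |x| ^ (p - 1) := by
  rcases eq_or_ne x 0 with rfl | hx
  · simp [Real.zero_rpow (show p - 1 ≠ 0 by linarith)]
  · rw [abs_mul, abs_of_nonneg (Real.rpow_nonneg (abs_nonneg x) _), show p - 1 = p - 2 + 1 by ring,
      Real.rpow_add_one (abs_ne_zero.mpr hx)]

lemma hasDerivAt_rho {N : ℕ} (hN : 1 ≤ N) (r : ℝ) : HasDerivAt (rho N) (rho' N r) r := by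
  have h : HasDerivAt (rho N) ((N - 1 : ℕ) * r ^ (N - 1 - 1) * rexp r + r ^ (N - 1) * rexp r) r :=
    (hasDerivAt_pow (N - 1) r).mul (Real.hasDerivAt_exp r)
  refine h.congr_deriv ?_
  rw [rho', Nat.cast_sub hN, show N - 1 - 1 = N - 2 by omega]
  push_cast
  ring

lemma rho_pos (N : ℕ) {r : ℝ} (hr : 0 < r) : 0 < rho N r :=
  mul_pos (pow_pos hr _) (Real.exp_pos r)

lemma IsPreconnected.forall_pos_of_forall_ne_zero {X : Type*} [TopologicalSpace X] {s : Set X}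
    (hs : IsPreconnected s) {φ : X → ℝ} (hφ : ContinuousOn φ s) (h0 : ∀ x ∈ s, φ x ≠ 0)
    {x₀ : X} (hx₀ : x₀ ∈ s) (hpos : 0 < φ x₀) : ∀ x ∈ s, 0 < φ x := by
  intro x hx
  by_contra! hneg
  obtain ⟨y, hy, hy0⟩ := hs.intermediate_value₂ hx hx₀ hφ continuousOn_const hneg hpos.le
  exact h0 y hy hy0

namespace IsProfileSol

variable {N : ℕ} {p a : ℝ} {f f' F' : ℝ → ℝ}

lemma apply_zero (hf : IsProfileSol N p a f f' F') : f 0 = a := hf.2.2.2.2.2.1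

lemma continuousOn (hf : IsProfileSol N p a f f' F') : ContinuousOn f (Ici 0) :=
  fun r hr => (hf.1 r hr).continuousWithinAt

lemma hasDerivAt_of_pos (hf : IsProfileSol N p a f f' F') {r : ℝ} (hr : 0 < r) :
    HasDerivAt f (f' r) r :=
  (hf.1 r hr.le).hasDerivAt (Ici_mem_nhds hr)

lemma continuousOn_gFun (hf : IsProfileSol N p a f f' F') : ContinuousOn (gFun p f') (Ici 0) :=
  fun r hr => (hf.2.2.1 r hr).continuousWithinAt.neg

lemma gFun_zero (hf : IsProfileSol N p a f f' F') : gFun p f' 0 = 0 := by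
  simp [gFun, hf.2.2.2.2.2.2]

lemma hasDerivAt_gFun (hf : IsProfileSol N p a f f' F') (hp : 1 < p) {r : ℝ} (hr : 0 < r) :
    HasDerivAt (gFun p f')
      (f r - |gFun p f' r| - ((N - 1) / r) * gFun p f' r) r := by
  have hG : HasDerivAt (gFun p f') (-F' r) r :=
    ((hf.2.2.1 r hr.le).hasDerivAt (Ici_mem_nhds hr)).neg
  refine hG.congr_deriv ?_
  rw [gFun, abs_neg, abs_abs_rpow_sub_two_mul_self hp]
  linarith [hf.2.2.2.2.1 r hr]

lemma continuousOn_wFun (hf : IsProfileSol N p a f f' F') : ContinuousOn (wFun N p f') (Ici 0) :=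
  (continuous_id.pow _ |>.mul Real.continuous_exp).continuousOn.mul hf.continuousOn_gFun

/-- Since `ρ'/ρ = (N-1)/r + 1`, the weight absorbs the damping term `(N-1)/r · g`. -/
lemma hasDerivAt_wFun (hf : IsProfileSol N p a f f' F') (hN : 1 ≤ N) (hp : 1 < p) {r : ℝ}
    (hr : 0 < r) :
    HasDerivAt (wFun N p f') (rho N r * (gFun p f' r + f r - |gFun p f' r|)) r := by
  refine ((hasDerivAt_rho hN r).mul (hf.hasDerivAt_gFun hp hr)).congr_deriv ?_
  have hpow : ((N : ℝ) - 1) * r ^ (N - 2) * r = ((N : ℝ) - 1) * r ^ (N - 1) := by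
    obtain rfl | hN2 := (show N = 1 ∨ 2 ≤ N by omega)
    · simp
    · rw [mul_assoc, ← pow_succ, show N - 2 + 1 = N - 1 by omega]
  simp only [rho, rho']
  field_simp
  linear_combination gFun p f' r * hpow

lemma strictMonoOn_wFun (hf : IsProfileSol N p a f f' F') (hN : 1 ≤ N) (hp : 1 < p) {s t : ℝ}
    (hs : 0 ≤ s) (h : ∀ x ∈ Ioo s t, |gFun p f' x| < gFun p f' x + f x) :
    StrictMonoOn (wFun N p f') (Icc s t) := by
  have hpos : ∀ x ∈ Ioo s t, 0 < x := fun x hx => hs.trans_lt hx.1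
  refine strictMonoOn_of_hasDerivWithinAt_pos (convex_Icc s t)
    (f' := fun x => rho N x * (gFun p f' x + f x - |gFun p f' x|))
    (hf.continuousOn_wFun.mono fun x hx => hs.trans hx.1) (fun x hx => ?_) (fun x hx => ?_)
  · rw [interior_Icc] at hx ⊢
    exact (hf.hasDerivAt_wFun hN hp (hpos x hx)).hasDerivWithinAt
  · rw [interior_Icc] at hx
    exact mul_pos (rho_pos N (hpos x hx)) (by linarith [h x hx])

lemma exists_gFun_pos_near_zero (hf : IsProfileSol N p a f f' F') (hN : 1 ≤ N) (hp : 1 < p)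
    (ha : 0 < a) : ∃ δ > 0, ∀ r ∈ Ioc 0 δ, 0 < gFun p f' r := by
  have hcont : ContinuousWithinAt (fun r => f r - 2 * |gFun p f' r|) (Ici 0) 0 :=
    (hf.continuousOn 0 self_mem_Ici).sub ((hf.continuousOn_gFun 0 self_mem_Ici).abs.const_mul 2)
  have h0 : 0 < f 0 - 2 * |gFun p f' 0| := by simp [hf.apply_zero, hf.gFun_zero, ha]
  obtain ⟨δ, hδ, hsub⟩ := mem_nhdsGE_iff_exists_Ico_subset.mp (hcont.eventually (lt_mem_nhds h0))
  have hw := hf.strictMonoOn_wFun hN hp le_rfl fun x hx => by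
    have hfg : 0 < f x - 2 * |gFun p f' x| := hsub (Ioo_subset_Ico_self hx)
    linarith [neg_abs_le (gFun p f' x)]
  refine ⟨δ, hδ, fun r hr => ?_⟩
  have hwr := hw (left_mem_Icc.mpr (le_of_lt hδ)) (Ioc_subset_Icc_self hr) hr.1
  rw [wFun, wFun, hf.gFun_zero, mul_zero] at hwr
  exact (pos_iff_pos_of_mul_pos hwr).mp (rho_pos N hr.1)

lemma gFun_pos_of_pos (hf : IsProfileSol N p a f f' F') (hN : 1 ≤ N) (hp : 1 < p) (ha : 0 < a)
    (hfpos : ∀ r ∈ Ioi 0, 0 < f r) : ∀ r ∈ Ioi 0, 0 < gFun p f' r := by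
  obtain ⟨δ, hδ, hδg⟩ := hf.exists_gFun_pos_near_zero hN hp ha
  intro t ht
  by_contra! hgt
  have hδt : δ < t := lt_of_not_ge fun h => (hδg t ⟨ht, h⟩).not_ge hgt
  -- `m` is the first point after `δ` where `g` fails to be positive.
  set S := Icc δ t ∩ gFun p f' ⁻¹' Iic 0
  have hSc : IsClosed S := (hf.continuousOn_gFun.mono fun x hx => hδ.le.trans hx.1)
    |>.preimage_isClosed_of_isClosed isClosed_Icc isClosed_Iic
  have hSb : BddBelow S := ⟨δ, fun x hx => hx.1.1⟩
  have hmS : sInf S ∈ S := hSc.csInf_mem ⟨t, ⟨hδt.le, le_rfl⟩, hgt⟩ hSb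
  set m := sInf S
  have hδm : δ < m :=
    hmS.1.1.lt_of_ne fun h => (hδg δ ⟨hδ, le_rfl⟩).not_ge (h ▸ hmS.2)
  have hgpos : ∀ x ∈ Ioo δ m, 0 < gFun p f' x := fun x hx => by
    by_contra! hgx
    exact (csInf_le hSb ⟨⟨hx.1.le, hx.2.le.trans hmS.1.2⟩, hgx⟩).not_gt hx.2
  have hw := hf.strictMonoOn_wFun hN hp hδ.le fun x hx => by
    rw [abs_of_pos (hgpos x hx)]
    linarith [hfpos x (hδ.trans hx.1)]
  have hwδm := hw (left_mem_Icc.mpr hδm.le) (right_mem_Icc.mpr hδm.le) hδm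
  have hwδ : 0 < wFun N p f' δ := mul_pos (rho_pos N hδ) (hδg δ ⟨hδ, le_rfl⟩)
  have hwm : wFun N p f' m ≤ 0 := mul_nonpos_of_nonneg_of_nonpos (rho_pos N (hδ.trans hδm)).le hmS.2
  linarith

lemma strictAntiOn_of_gFun_pos (hf : IsProfileSol N p a f f' F')
    (hg : ∀ r ∈ Ioi 0, 0 < gFun p f' r) : StrictAntiOn f (Ici 0) := by
  refine strictAntiOn_of_hasDerivWithinAt_neg (convex_Ici 0) hf.continuousOn (f' := f')
    (fun x hx => ?_) (fun x hx => ?_)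
  · rw [interior_Ici] at hx ⊢
    exact (hf.hasDerivAt_of_pos hx).hasDerivWithinAt
  · rw [interior_Ici] at hx
    by_contra! hx'
    have := hg x hx
    rw [gFun] at this
    linarith [mul_nonneg (Real.rpow_nonneg (abs_nonneg (f' x)) (p - 2)) hx']

lemma nonneg_of_gFun_pos (hf : IsProfileSol N p a f f' F') (hN : 1 ≤ N) (hp : 1 < p)
    (hg : ∀ r ∈ Ioi 0, 0 < gFun p f' r) : ∀ r ∈ Ioi 0, 0 ≤ f r := by
  intro r₁ hr₁
  by_contra! hf₁
  have hanti := hf.strictAntiOn_of_gFun_pos hg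
  have hpos : ∀ x ∈ interior (Ici r₁), 0 < x := fun x hx =>
    hr₁.trans (by rwa [interior_Ici] at hx)
  have hslope := (convex_Ici r₁).image_sub_le_mul_sub_of_deriv_le
    (hf.continuousOn_gFun.mono (Ici_subset_Ici.mpr hr₁.le))
    (fun x hx => (hf.hasDerivAt_gFun hp (hpos x hx)).differentiableAt.differentiableWithinAt)
    (C := f r₁) fun x hx => by
      have hx₀ := hpos x hx
      rw [(hf.hasDerivAt_gFun hp hx₀).deriv]
      rw [interior_Ici] at hx
      have hdamp : 0 ≤ (N - 1) / x * gFun p f' x :=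
        mul_nonneg (div_nonneg (by norm_cast; linarith [hN]) hx₀.le) (hg x hx₀).le
      linarith [abs_nonneg (gFun p f' x), hanti (mem_Ici.2 hr₁.le) (mem_Ici.2 hx₀.le) hx]
  set y := r₁ + gFun p f' r₁ / -f r₁ + 1 with hy_def
  have hy : r₁ ≤ y := by
    have : 0 ≤ gFun p f' r₁ / -f r₁ := div_nonneg (hg r₁ hr₁).le (by linarith)
    linarith
  have hgy := hslope r₁ self_mem_Ici y hy hy
  have hfy : f r₁ * (y - r₁) = -gFun p f' r₁ + f r₁ := by
    rw [hy_def]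
    field_simp [hf₁.ne]
    ring
  linarith [hg y (hr₁.trans_le hy)]

end IsProfileSol

theorem stmt8_general (N : ℕ) (hN : 2 ≤ N) (p : ℝ)
    (hp1 : 2 * (N : ℝ) / ((N : ℝ) + 1) < p)
    (a : ℝ) (ha : 0 < a)
    (f f' F' : ℝ → ℝ) (hf : IsProfileSol N p a f f' F') :
    (∃ r, 0 < r ∧ f r = 0) ↔ (∃ r, 0 < r ∧ gFun p f' r = 0) := by
  have hN1 : 1 ≤ N := by omega
  have hp : 1 < p := by
    refine lt_of_le_of_lt ?_ hp1
    rw [le_div_iff₀ (by positivity)]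
    linarith [(Nat.one_le_cast (α := ℝ)).mpr hN1]
  constructor
  · rintro ⟨r₀, hr₀, hfr₀⟩
    by_contra! hg
    obtain ⟨δ, hδ, hδg⟩ := hf.exists_gFun_pos_near_zero hN1 hp ha
    have hgpos := isPreconnected_Ioi.forall_pos_of_forall_ne_zero
      (hf.continuousOn_gFun.mono Ioi_subset_Ici_self) hg hδ (hδg δ ⟨hδ, le_rfl⟩)
    have hdecr := hf.strictAntiOn_of_gFun_pos hgpos (mem_Ici.2 hr₀.le)
      (mem_Ici.2 (by linarith)) (lt_add_one r₀)
    linarith [hf.nonneg_of_gFun_pos hN1 hp hgpos (r₀ + 1) (mem_Ioi.2 (by linarith))]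
  · rintro ⟨r₁, hr₁, hgr₁⟩
    by_contra! hf0
    have hf_ne : ∀ r ∈ Ici 0, f r ≠ 0 := by
      intro r hr
      obtain rfl | hr := (mem_Ici.1 hr).eq_or_lt
      · rw [hf.apply_zero]; exact ha.ne'
      · exact hf0 r hr
    have hfpos := isPreconnected_Ici.forall_pos_of_forall_ne_zero hf.continuousOn hf_ne
      self_mem_Ici (hf.apply_zero ▸ ha)
    have hgpos := hf.gFun_pos_of_pos hN1 hp ha fun r hr => hfpos r (mem_Ici.2 (le_of_lt hr))
    exact (hgpos r₁ hr₁).ne' hgr₁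

/-- `f(·;a)` has a positive zero iff `g(·;a)` has a positive zero. -/
theorem stmt8 (N : ℕ) (hN : 2 ≤ N) (p : ℝ)
    (hp1 : 2 * (N : ℝ) / ((N : ℝ) + 1) < p) (hp2 : p < 2)
    (a : ℝ) (ha : 0 < a)
    (f f' F' : ℝ → ℝ) (hf : IsProfileSol N p a f f' F') :
    (∃ r, 0 < r ∧ f r = 0) ↔ (∃ r, 0 < r ∧ gFun p f' r = 0) :=
  stmt8_general N hN p hp1 a ha f f' F' hf
end

section
/- Let a > 0 and assume g(r;a) > 0 for all r ∈ (0,∞). Then the quotient w'(r;a)/w(r;a) converges as r → ∞, and its limit is either 0 or 1. -/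
open Real Set Filter MeasureTheory

open Topology

/-!
Since `g > 0`, `f` is strictly decreasing, and in the first-order system `f' = -g^q`,
`g' = f - (1 + c/r) g` (with `q = 1/(p-1) > 1`) this forces `f > 0`, and then `f, g → 0`:
otherwise one of them would eventually decrease at a linear rate. As `ρ' = (1 + c/r) ρ`, the
quotient `w'/w` equals `φ = f/g`, which solves the perturbed logistic equation
`φ' = φ (1 - φ) + c φ / r - g^(q-1)` with vanishing perturbations. Once `φ` exceeds a small
level `ε` it can never drop below it again and it grows at a rate bounded below until it
passes `1 - ε`, while it cannot stay above `1 + ε`; hence `φ → 0` or `φ → 1`.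
-/

section DifferentialInequalities

variable {h h' : ℝ → ℝ}

lemma le_of_deriv_neg_at_level {a C : ℝ} (hh : ∀ r ≥ a, HasDerivAt h (h' r) r) (ha : h a ≤ C)
    (hC : ∀ r ≥ a, h r = C → h' r < 0) : ∀ r ≥ a, h r ≤ C := fun _ hr =>
  image_le_of_deriv_right_lt_deriv_boundary' (B := fun _ => C) (B' := 0)
    (fun x hx => (hh x hx.1).continuousAt.continuousWithinAt)
    (fun x hx => (hh x hx.1).hasDerivWithinAt) ha continuousOn_const
    (fun _ _ => hasDerivWithinAt_const _ _ _) (fun x hx => hC x hx.1) ⟨hr, le_rfl⟩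

lemma ge_of_deriv_pos_at_level {a C : ℝ} (hh : ∀ r ≥ a, HasDerivAt h (h' r) r) (ha : C ≤ h a)
    (hC : ∀ r ≥ a, h r = C → 0 < h' r) : ∀ r ≥ a, C ≤ h r := fun _ hr =>
  image_le_of_deriv_right_lt_deriv_boundary' (f := fun _ => C) (f' := 0) continuousOn_const
    (fun _ _ => hasDerivWithinAt_const _ _ _) ha
    (fun x hx => (hh x hx.1).continuousAt.continuousWithinAt)
    (fun x hx => (hh x hx.1).hasDerivWithinAt) (fun x hx hx' => hC x hx.1 hx'.symm) ⟨hr, le_rfl⟩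

lemma tendsto_atBot_of_deriv_le_neg {δ : ℝ} (hδ : 0 < δ)
    (hh : ∀ᶠ r in atTop, HasDerivAt h (h' r) r) (hh' : ∀ᶠ r in atTop, h' r ≤ -δ) :
    Tendsto h atTop atBot := by
  obtain ⟨a, ha⟩ := eventually_atTop.1 (hh.and hh')
  have hline : Tendsto (fun r => -δ * r + (h a + δ * a)) atTop atBot :=
    tendsto_atBot_add_const_right _ _ (tendsto_id.const_mul_atTop_of_neg (neg_lt_zero.2 hδ))
  refine tendsto_atBot_mono' _ ?_ hline
  filter_upwards [eventually_ge_atTop a] with r hr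
  exact image_le_of_deriv_right_le_deriv_boundary (B := fun x => -δ * x + (h a + δ * a))
    (B' := fun _ => -δ) (fun x hx => (ha x hx.1).1.continuousAt.continuousWithinAt)
    (fun x hx => (ha x hx.1).1.hasDerivWithinAt) (le_of_eq (by ring)) (by fun_prop)
    (fun x _ => (((hasDerivAt_id x).const_mul (-δ)).add_const _).hasDerivWithinAt.congr_deriv
      (mul_one _)) (fun x hx => (ha x hx.1).2) ⟨hr, le_rfl⟩

lemma eventually_le_of_deriv_le_neg {C δ : ℝ} (hδ : 0 < δ)
    (hh : ∀ᶠ r in atTop, HasDerivAt h (h' r) r) (hC : ∀ᶠ r in atTop, C ≤ h r → h' r ≤ -δ) :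
    ∀ᶠ r in atTop, h r ≤ C := by
  obtain ⟨a, ha⟩ := eventually_atTop.1 (hh.and hC)
  obtain ⟨b, hab, hb⟩ : ∃ b ≥ a, h b ≤ C := by
    by_contra! hgt
    have hbot := tendsto_atBot_of_deriv_le_neg hδ hh
      (eventually_atTop.2 ⟨a, fun r hr => (ha r hr).2 (hgt r hr).le⟩)
    obtain ⟨r, hlt, hr⟩ := ((hbot.eventually_lt_atBot C).and (eventually_ge_atTop a)).exists
    exact (hgt r hr).not_gt hlt
  refine eventually_atTop.2 ⟨b, le_of_deriv_neg_at_level (fun r hr => (ha r (hab.trans hr)).1) hb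
    fun r hr hC => ?_⟩
  linarith [(ha r (hab.trans hr)).2 hC.ge]

lemma eventually_ge_of_deriv_ge_pos {C δ : ℝ} (hδ : 0 < δ)
    (hh : ∀ᶠ r in atTop, HasDerivAt h (h' r) r) (hC : ∀ᶠ r in atTop, h r ≤ C → δ ≤ h' r) :
    ∀ᶠ r in atTop, C ≤ h r := by
  have := eventually_le_of_deriv_le_neg (h := -h) (h' := -h') (C := -C) hδ
    (hh.mono fun r hr => hr.neg) (hC.mono fun r hr hle => neg_le_neg (hr (by simpa using hle)))
  exact this.mono fun r hr => by simpa using hr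

end DifferentialInequalities

section Logistic

variable {φ ψ e : ℝ → ℝ}

lemma eventually_le_one_add_of_logistic
    (hφ : ∀ᶠ r in atTop, HasDerivAt φ (-ψ r - φ r * (φ r - 1 - e r)) r)
    (hψ : ∀ᶠ r in atTop, 0 ≤ ψ r) (he : Tendsto e atTop (𝓝 0)) {ε : ℝ} (hε : 0 < ε) :
    ∀ᶠ r in atTop, φ r ≤ 1 + ε := by
  refine eventually_le_of_deriv_le_neg (half_pos hε) hφ ?_
  filter_upwards [hψ, he.eventually (eventually_le_nhds (half_pos hε))] with r hψr her hφr
  nlinarith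

lemma logistic_dichotomy (hφ : ∀ᶠ r in atTop, HasDerivAt φ (-ψ r - φ r * (φ r - 1 - e r)) r)
    (hψ : Tendsto ψ atTop (𝓝 0)) (he : ∀ᶠ r in atTop, 0 ≤ e r) {ε : ℝ} (hε : 0 < ε)
    (hε' : ε ≤ 1 / 2) : (∀ᶠ r in atTop, φ r ≤ ε) ∨ ∀ᶠ r in atTop, 1 - ε ≤ φ r := by
  set κ := ε * (1 - ε) / 2 with hκ_def
  have hκ : 0 < κ := half_pos (mul_pos hε (by linarith))
  have hgrowth : ∀ᶠ r in atTop, ε ≤ φ r → φ r ≤ 1 - ε →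
      κ ≤ -ψ r - φ r * (φ r - 1 - e r) := by
    filter_upwards [hψ.eventually (eventually_le_nhds hκ), he] with r hψr her h₁ h₂
    nlinarith [hκ_def, mul_nonneg (sub_nonneg.2 h₁) (sub_nonneg.2 h₂),
      mul_nonneg (hε.le.trans h₁) her]
  obtain ⟨R, hR⟩ := eventually_atTop.1 (hφ.and hgrowth)
  by_cases hreach : ∃ r₀ ≥ R, ε ≤ φ r₀
  · obtain ⟨r₀, hr₀, hεφ⟩ := hreach
    have habove : ∀ r ≥ r₀, ε ≤ φ r :=
      ge_of_deriv_pos_at_level (fun r hr => (hR r (hr₀.trans hr)).1) hεφ fun r hr hφr =>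
        hκ.trans_le ((hR r (hr₀.trans hr)).2 hφr.ge (by linarith))
    refine .inr (eventually_ge_of_deriv_ge_pos hκ hφ ?_)
    filter_upwards [eventually_ge_atTop r₀] with r hr
    exact (hR r (hr₀.trans hr)).2 (habove r hr)
  · push Not at hreach
    exact .inl (eventually_atTop.2 ⟨R, fun r hr => (hreach r hr).le⟩)

theorem tendsto_zero_or_one_of_logistic
    (hφ : ∀ᶠ r in atTop, HasDerivAt φ (-ψ r - φ r * (φ r - 1 - e r)) r)
    (hφ_pos : ∀ᶠ r in atTop, 0 < φ r) (hψ_nonneg : ∀ᶠ r in atTop, 0 ≤ ψ r)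
    (hψ : Tendsto ψ atTop (𝓝 0)) (he_nonneg : ∀ᶠ r in atTop, 0 ≤ e r)
    (he : Tendsto e atTop (𝓝 0)) : Tendsto φ atTop (𝓝 0) ∨ Tendsto φ atTop (𝓝 1) := by
  have hsmall (ε : ℝ) (hε : 0 < ε) := logistic_dichotomy hφ hψ he_nonneg (ε := min (ε / 2) (1 / 4))
    (lt_min (half_pos hε) (by norm_num)) ((min_le_right _ _).trans (by norm_num))
  have hmin (ε : ℝ) : min (ε / 2) (1 / 4) ≤ ε / 2 ∧ min (ε / 2) (1 / 4) ≤ 1 / 4 :=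
    ⟨min_le_left _ _, min_le_right _ _⟩
  rcases logistic_dichotomy hφ hψ he_nonneg (ε := 1 / 4) (by norm_num) (by norm_num)
    with hlow | hhigh
  · refine .inl (tendsto_order.2 ⟨fun a ha => hφ_pos.mono fun r hr => ha.trans hr,
      fun b hb => ?_⟩)
    rcases hsmall b hb with h | h
    · exact h.mono fun r hr => by linarith [hmin b]
    · obtain ⟨r, h₁, h₂⟩ := (h.and hlow).exists
      linarith [hmin b]
  · refine .inr (tendsto_order.2 ⟨fun a ha => ?_, fun b hb => ?_⟩)
    · rcases hsmall (1 - a) (sub_pos.2 ha) with h | h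
      · obtain ⟨r, h₁, h₂⟩ := (h.and hhigh).exists
        linarith [hmin (1 - a)]
      · exact h.mono fun r hr => by linarith [hmin (1 - a)]
    · filter_upwards [eventually_le_one_add_of_logistic hφ hψ_nonneg he
        (half_pos (sub_pos.2 hb))] with r hr
      linarith

end Logistic

/-- The profile equation as a first-order system for `f` and `g = (-f')^{p-1}`, with
`q = 1/(p-1)` and `c = N - 1`. -/
structure IsFluxSystem (q c : ℝ) (f g : ℝ → ℝ) : Prop where
  hasDerivAt_fst : ∀ r > 0, HasDerivAt f (-g r ^ q) r
  hasDerivAt_snd : ∀ r > 0, HasDerivAt g (f r - g r - c / r * g r) r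
  snd_pos : ∀ r > 0, 0 < g r

namespace IsFluxSystem

variable {q c : ℝ} {f g : ℝ → ℝ}

lemma strictAntiOn_fst (hs : IsFluxSystem q c f g) : StrictAntiOn f (Ioi 0) :=
  strictAntiOn_of_deriv_neg (convex_Ioi 0)
    (fun r hr => (hs.hasDerivAt_fst r hr).continuousAt.continuousWithinAt) fun r hr => by
      rw [interior_Ioi] at hr
      rw [(hs.hasDerivAt_fst r hr).deriv]
      exact neg_neg_of_pos (rpow_pos_of_pos (hs.snd_pos r hr) q)

lemma fst_pos (hs : IsFluxSystem q c f g) (hc : 0 ≤ c) : ∀ r > 0, 0 < f r := by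
  intro r₀ hr₀
  by_contra! hf₀
  have hneg : f (r₀ + 1) < 0 :=
    (hs.strictAntiOn_fst hr₀ (by simp only [mem_Ioi]; linarith) (by linarith)).trans_le hf₀
  have hbot : Tendsto g atTop atBot := by
    refine tendsto_atBot_of_deriv_le_neg (neg_pos.2 hneg)
      ((eventually_gt_atTop 0).mono hs.hasDerivAt_snd) ?_
    filter_upwards [eventually_gt_atTop (r₀ + 1)] with r hr
    have hr₀r : r₀ < r := by linarith
    have hfr : f r ≤ f (r₀ + 1) :=
      hs.strictAntiOn_fst.antitoneOn (by simp only [mem_Ioi]; linarith) (hr₀.trans hr₀r) hr.le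
    nlinarith [hs.snd_pos r (hr₀.trans hr₀r), div_nonneg hc (hr₀.trans hr₀r).le]
  obtain ⟨r, hr, hlt⟩ := ((hbot.eventually_lt_atBot 0).and (eventually_gt_atTop 0)).exists
  exact hr.not_gt (hs.snd_pos r hlt)

lemma tendsto_fst (hs : IsFluxSystem q c f g) (hq : 0 ≤ q) (hc : 0 ≤ c) :
    Tendsto f atTop (𝓝 0) := by
  have hpos := hs.fst_pos hc
  suffices h : ∀ ε > 0, ∃ r > 0, f r < ε by
    refine tendsto_order.2 ⟨fun a ha => (eventually_gt_atTop 0).mono fun r hr =>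
      ha.trans (hpos r hr), fun ε hε => ?_⟩
    obtain ⟨r₀, hr₀, hlt⟩ := h ε hε
    filter_upwards [eventually_ge_atTop r₀] with r hr
    exact (hs.strictAntiOn_fst.antitoneOn hr₀ (hr₀.trans_le hr) hr).trans_lt hlt
  intro ε hε
  by_contra! hge
  have hg : ∀ᶠ r in atTop, ε / 2 ≤ g r := by
    refine eventually_ge_of_deriv_ge_pos (δ := ε / 4) (by positivity)
      ((eventually_gt_atTop 0).mono hs.hasDerivAt_snd) ?_
    have hcr : Tendsto (fun r => c / r) atTop (𝓝 0) := tendsto_const_nhds.div_atTop tendsto_id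
    filter_upwards [eventually_gt_atTop 0, hcr.eventually (eventually_le_nhds one_half_pos)]
      with r hr hcr hgr
    nlinarith [hge r hr, mul_le_mul_of_nonneg_right hcr (hs.snd_pos r hr).le]
  have hbot : Tendsto f atTop atBot := by
    refine tendsto_atBot_of_deriv_le_neg (rpow_pos_of_pos (half_pos hε) q)
      ((eventually_gt_atTop 0).mono hs.hasDerivAt_fst) ?_
    exact hg.mono fun r hr => neg_le_neg (rpow_le_rpow (half_pos hε).le hr hq)
  obtain ⟨r, hr, hlt⟩ := ((hbot.eventually_lt_atBot 0).and (eventually_gt_atTop 0)).exists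
  exact hr.not_gt (hpos r hlt)

lemma tendsto_snd (hs : IsFluxSystem q c f g) (hq : 0 ≤ q) (hc : 0 ≤ c) :
    Tendsto g atTop (𝓝 0) := by
  refine tendsto_order.2 ⟨fun a ha => (eventually_gt_atTop 0).mono fun r hr =>
    ha.trans (hs.snd_pos r hr), fun b hb => ?_⟩
  have hle : ∀ᶠ r in atTop, g r ≤ b / 2 := by
    refine eventually_le_of_deriv_le_neg (δ := b / 4) (by positivity)
      ((eventually_gt_atTop 0).mono hs.hasDerivAt_snd) ?_
    filter_upwards [eventually_gt_atTop 0,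
      (hs.tendsto_fst hq hc).eventually (eventually_le_nhds (by positivity : 0 < b / 4))]
      with r hr hfr hgr
    nlinarith [mul_nonneg (div_nonneg hc hr.le) (hs.snd_pos r hr).le]
  exact hle.mono fun r hr => by linarith

lemma hasDerivAt_fst_div_snd (hs : IsFluxSystem q c f g) {r : ℝ} (hr : 0 < r) :
    HasDerivAt (fun r => f r / g r) (-g r ^ (q - 1) - f r / g r * (f r / g r - 1 - c / r)) r := by
  have hg := hs.snd_pos r hr
  refine ((hs.hasDerivAt_fst r hr).div (hs.hasDerivAt_snd r hr) hg.ne').congr_deriv ?_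
  rw [rpow_sub_one hg.ne']
  field_simp

theorem tendsto_fst_div_snd (hs : IsFluxSystem q c f g) (hq : 1 < q) (hc : 0 ≤ c) :
    Tendsto (fun r => f r / g r) atTop (𝓝 0) ∨ Tendsto (fun r => f r / g r) atTop (𝓝 1) := by
  have hq' : 0 < q - 1 := sub_pos.2 hq
  have hψ : Tendsto (fun r => g r ^ (q - 1)) atTop (𝓝 0) := by
    simpa [zero_rpow hq'.ne'] using (hs.tendsto_snd (by linarith) hc).rpow_const (.inr hq'.le)
  exact tendsto_zero_or_one_of_logistic
    ((eventually_gt_atTop 0).mono fun r hr => hs.hasDerivAt_fst_div_snd hr)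
    ((eventually_gt_atTop 0).mono fun r hr => div_pos (hs.fst_pos hc r hr) (hs.snd_pos r hr))
    ((eventually_gt_atTop 0).mono fun r hr => (rpow_pos_of_pos (hs.snd_pos r hr) _).le) hψ
    ((eventually_gt_atTop 0).mono fun r hr => div_nonneg hc hr.le)
    (tendsto_const_nhds.div_atTop tendsto_id)

end IsFluxSystem

lemma deriv_neg_of_gFun_pos {p : ℝ} {f' : ℝ → ℝ} {r : ℝ} (h : 0 < gFun p f' r) : f' r < 0 :=
  neg_of_mul_neg_right (neg_pos.1 h) (rpow_nonneg (abs_nonneg _) _)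

lemma gFun_eq_rpow {p : ℝ} {f' : ℝ → ℝ} {r : ℝ} (h : f' r < 0) :
    gFun p f' r = (-f' r) ^ (p - 1) := by
  rw [gFun, abs_of_neg h, show p - 1 = p - 2 + 1 by ring, rpow_add_one (neg_ne_zero.2 h.ne)]
  ring

lemma rho'_eq {N : ℕ} (hN : 2 ≤ N) {r : ℝ} (hr : r ≠ 0) :
    rho' N r = (1 + ((N : ℝ) - 1) / r) * rho N r := by
  obtain ⟨n, rfl⟩ := Nat.exists_eq_add_of_le' hN
  simp only [rho', rho, show n + 2 - 1 = n + 1 by omega, pow_succ]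
  push_cast
  field_simp
  ring

namespace IsProfileSol

variable {N : ℕ} {p a : ℝ} {f f' F' : ℝ → ℝ}

lemma neg_F'_eq (hf : IsProfileSol N p a f f' F') {r : ℝ} (hr : 0 < r) (hg : 0 < gFun p f' r) :
    -F' r = f r - gFun p f' r - ((N : ℝ) - 1) / r * gFun p f' r := by
  have hf' := deriv_neg_of_gFun_pos hg
  have habs : |f' r| ^ (p - 1) = gFun p f' r := by rw [gFun_eq_rpow hf', abs_of_neg hf']
  have := hf.2.2.2.2.1 r hr
  rw [gFun] at habs ⊢
  linarith

lemma isFluxSystem (hf : IsProfileSol N p a f f' F') (hp : 1 < p)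
    (hg : ∀ r, 0 < r → 0 < gFun p f' r) :
    IsFluxSystem (p - 1)⁻¹ ((N : ℝ) - 1) f (gFun p f') where
  hasDerivAt_fst r hr := by
    have hf' := deriv_neg_of_gFun_pos (hg r hr)
    rw [gFun_eq_rpow hf', rpow_rpow_inv (neg_pos.2 hf').le (by linarith), neg_neg]
    exact (hf.1 r hr.le).hasDerivAt (Ici_mem_nhds hr)
  hasDerivAt_snd r hr := by
    rw [← hf.neg_F'_eq hr (hg r hr)]
    exact ((hf.2.2.1 r hr.le).hasDerivAt (Ici_mem_nhds hr)).neg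
  snd_pos := hg

lemma wDeriv_div_wFun (hf : IsProfileSol N p a f f' F') (hN : 2 ≤ N) {r : ℝ} (hr : 0 < r)
    (hg : 0 < gFun p f' r) : wDeriv N p f' F' r / wFun N p f' r = f r / gFun p f' r := by
  have hρ : rho N r ≠ 0 := (mul_pos (pow_pos hr _) (exp_pos r)).ne'
  have hw : wDeriv N p f' F' r = rho N r * f r := by
    rw [wDeriv, rho'_eq hN hr.ne', sub_eq_add_neg, ← mul_neg, hf.neg_F'_eq hr hg]
    ring
  rw [hw, wFun, mul_div_mul_left _ _ hρ]

end IsProfileSol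

theorem stmt10_general (N : ℕ) (hN : 2 ≤ N) (p : ℝ)
    (hp1 : 2 * (N : ℝ) / ((N : ℝ) + 1) < p) (hp2 : p < 2)
    (a : ℝ)
    (f f' F' : ℝ → ℝ) (hf : IsProfileSol N p a f f' F')
    (hg : ∀ r, 0 < r → 0 < gFun p f' r) :
    ∃ L : ℝ, Filter.Tendsto (fun r => wDeriv N p f' F' r / wFun N p f' r)
        Filter.atTop (nhds L) ∧ (L = 0 ∨ L = 1) := by
  have hN' : (2 : ℝ) ≤ N := by exact_mod_cast hN
  have hp : 1 < p := lt_of_le_of_lt (by rw [le_div_iff₀ (by linarith)]; linarith) hp1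
  have hq : 1 < (p - 1)⁻¹ := (one_lt_inv₀ (by linarith)).2 (by linarith)
  have hquot : (fun r => wDeriv N p f' F' r / wFun N p f' r) =ᶠ[atTop]
      fun r => f r / gFun p f' r :=
    (eventually_gt_atTop 0).mono fun r hr => hf.wDeriv_div_wFun hN hr (hg r hr)
  rcases (hf.isFluxSystem hp hg).tendsto_fst_div_snd hq (by linarith) with h | h
  · exact ⟨0, h.congr' hquot.symm, .inl rfl⟩
  · exact ⟨1, h.congr' hquot.symm, .inr rfl⟩

/-- if `g(·;a) > 0` on `(0,∞)`, then `w'(r;a)/w(r;a)` converges as `r → ∞`,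
with limit `0` or `1`. -/
theorem stmt10 (N : ℕ) (hN : 2 ≤ N) (p : ℝ)
    (hp1 : 2 * (N : ℝ) / ((N : ℝ) + 1) < p) (hp2 : p < 2)
    (a : ℝ) (ha : 0 < a)
    (f f' F' : ℝ → ℝ) (hf : IsProfileSol N p a f f' F')
    (hg : ∀ r, 0 < r → 0 < gFun p f' r) :
    ∃ L : ℝ, Filter.Tendsto (fun r => wDeriv N p f' F' r / wFun N p f' r)
        Filter.atTop (nhds L) ∧ (L = 0 ∨ L = 1) :=
  stmt10_general N hN p hp1 hp2 a f f' F' hf hg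
end
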